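/- Suppose k, n, m are positive integers with k ≥ 150, n − m ≥ 2, a1, a2 ∈ {1,…,9}, and Q_k = a1·(10^n−1)/9 − a2·(10^m−1)/9. Then 2n < k + 5; in particular n < k + 2. -/

import Mathlib

/-! `Q_k = a₁ R_n - a₂ R_m` with repunits `R_s = (10^s - 1)/9` is at least `R_n - 9 R_{n-2}`,
which exceeds `10^(n-1)`; on the other hand `Q_k ≤ 2·3^k`, so `100^(n-1) < 4·9^k < 10^(k+1)`. -/

/-- The Pell-Lucas sequence: `Q 0 = Q 1 = 2`, `Q (n+2) = 2 * Q (n+1) + Q n`. -/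
def pellLucas : ℕ → ℕ
  | 0 => 2
  | 1 => 2
  | n + 2 => 2 * pellLucas (n + 1) + pellLucas n

theorem pellLucas_le_two_mul_three_pow (k : ℕ) : pellLucas k ≤ 2 * 3 ^ k := by
  induction k using pellLucas.induct with
  | case1 => simp [pellLucas]
  | case2 => simp [pellLucas]
  | case3 k ih₁ ih₀ =>
    rw [pellLucas, pow_succ, pow_succ] at *
    omega

theorem two_mul_le_of_ten_pow_lt_pellLucas {j k : ℕ} (h : 10 ^ j < pellLucas k) : 2 * j ≤ k := by
  have hQ := pellLucas_le_two_mul_three_pow k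
  have : 10 ^ (2 * j) < 10 ^ (k + 1) :=
    calc 10 ^ (2 * j) = 10 ^ j * 10 ^ j := by ring
      _ < (2 * 3 ^ k) * (2 * 3 ^ k) := Nat.mul_self_lt_mul_self (by omega)
      _ = 4 * 9 ^ k := by rw [show (9 : ℕ) = 3 * 3 by rfl, mul_pow]; ring
      _ < 10 * 10 ^ k := by
        have := Nat.pow_le_pow_left (show 9 ≤ 10 by norm_num) k
        have : 0 < 10 ^ k := by positivity
        omega
      _ = 10 ^ (k + 1) := by ring
  have := (Nat.pow_lt_pow_iff_right (by norm_num)).mp this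
  omega

theorem nine_mul_repunit (s : ℕ) : 9 * (((10 : ℤ) ^ s - 1) / 9) = 10 ^ s - 1 :=
  Int.mul_ediv_cancel' (by simpa using sub_one_dvd_pow_sub_one (10 : ℤ) s)

theorem ten_pow_pred_lt_mul_repunit_sub_mul_repunit {n m : ℕ} {a₁ a₂ : ℤ} (hnm : m + 2 ≤ n)
    (ha₁ : 1 ≤ a₁) (ha₂ : a₂ ≤ 9) :
    (10 : ℤ) ^ (n - 1) < a₁ * ((10 ^ n - 1) / 9) - a₂ * ((10 ^ m - 1) / 9) := by
  obtain ⟨j, rfl⟩ := Nat.exists_eq_add_of_le hnm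
  have hRn := nine_mul_repunit (m + 2 + j)
  have hRm := nine_mul_repunit m
  have hm : (10 : ℤ) ^ m ≤ 10 ^ (m + j) := pow_le_pow_right₀ (by norm_num) (by omega)
  have hm₁ : (1 : ℤ) ≤ 10 ^ m := one_le_pow₀ (by norm_num)
  have hn : (10 : ℤ) ^ (m + 2 + j) = 100 * 10 ^ (m + j) := by ring
  rw [show m + 2 + j - 1 = m + j + 1 by omega, pow_succ]
  rw [hn] at hRn ⊢
  nlinarith

theorem pellLucas_two_n_lt_general (k n m a1 a2 : ℕ) (hnm : m + 2 ≤ n)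
    (ha11 : 1 ≤ a1) (ha29 : a2 ≤ 9)
    (heq : (pellLucas k : ℤ) = (a1 : ℤ) * ((10 ^ n - 1) / 9) - (a2 : ℤ) * ((10 ^ m - 1) / 9)) :
    2 * n < k + 5 ∧ n < k + 2 := by
  have hlow : (10 : ℤ) ^ (n - 1) < pellLucas k :=
    heq ▸ ten_pow_pred_lt_mul_repunit_sub_mul_repunit hnm (by exact_mod_cast ha11)
      (by exact_mod_cast ha29)
  have := two_mul_le_of_ten_pow_lt_pellLucas (j := n - 1) (by exact_mod_cast hlow)
  omega

/-- Under the hypotheses of the Pell-Lucas equation, `2 n < k + 5`;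
in particular `n < k + 2`. -/
theorem pellLucas_two_n_lt (k n m a1 a2 : ℕ) (hk : 150 ≤ k) (hnm : m + 2 ≤ n) (hm : 1 ≤ m)
    (ha11 : 1 ≤ a1) (ha19 : a1 ≤ 9) (ha21 : 1 ≤ a2) (ha29 : a2 ≤ 9)
    (heq : (pellLucas k : ℤ) = (a1 : ℤ) * ((10 ^ n - 1) / 9) - (a2 : ℤ) * ((10 ^ m - 1) / 9)) :
    2 * n < k + 5 ∧ n < k + 2 :=
  pellLucas_two_n_lt_general k n m a1 a2 hnm ha11 ha29 heq
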